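/- arXiv:2411.14262 — 2 statements merged into one kernel-verified Lean document; each statement's English description precedes it below -/
import Mathlib

section
/- For a cubic polynomial force in sparse form and a two-mode displacement η = η_r e_r + η_s e_s with r < s < j, the tangent stiffness satisfies K̃ᵗᵢⱼ − K̃¹ᵢⱼ = K̄²ᵢᵣⱼ η_r + K̄²ᵢₛⱼ η_s + K̄³ᵢᵣₛⱼ η_r η_s + K̄³ᵢᵣᵣⱼ η_r² + K̄³ᵢₛₛⱼ η_s²; hence if η_r η_s ≠ 0 and all other coefficients are known, K̄³ᵢᵣₛⱼ is uniquely determined. -/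
/-! The tangent stiffness `K̃ᵗᵢⱼ` is the derivative of `f̃ᵢ` at `η` in the direction `e_j`, so each
monomial contributes one term for every slot its index tuple shares with `j`. The displacement is
supported on modes `r, s < j`, and the coefficients vanish off nondecreasing tuples, so `j` can only
survive in the last slot: what remains is `K̃¹ᵢⱼ + Σₐ K̄²ᵢₐⱼ ηₐ + Σₐ,ᵦ K̄³ᵢₐᵦⱼ ηₐ ηᵦ`, and `K̄³ᵢₛᵣⱼ = 0`
since `s > r`. The resulting identity is affine in `K̄³ᵢᵣₛⱼ` with slope `ηᵣ ηₛ`. -/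

open Finset

section
variable {ι : Type*} [Fintype ι]

def cubicPoly (c : ι → ℝ) (Q : ι → ι → ℝ) (T : ι → ι → ι → ℝ) (x : ι → ℝ) : ℝ :=
  (∑ a, c a * x a) + (∑ a, ∑ b, Q a b * x a * x b) + ∑ a, ∑ b, ∑ d, T a b d * x a * x b * x d

theorem fderiv_cubicPoly_apply (c : ι → ℝ) (Q : ι → ι → ℝ) (T : ι → ι → ι → ℝ) (η v : ι → ℝ) :
    fderiv ℝ (cubicPoly c Q T) η v =
      (∑ a, c a * v a) + (∑ a, ∑ b, Q a b * (v a * η b + η a * v b))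
        + ∑ a, ∑ b, ∑ d, T a b d * (v a * η b * η d + η a * v b * η d + η a * η b * v d) := by
  have hx (a : ι) := hasFDerivAt_apply (𝕜 := ℝ) a η
  have hF := ((HasFDerivAt.fun_sum (u := univ) fun a _ => (hx a).const_mul (c a)).fun_add
      (HasFDerivAt.fun_sum (u := univ) fun a _ => HasFDerivAt.fun_sum (u := univ) fun b _ =>
        ((hx a).const_mul (Q a b)).fun_mul (hx b))).fun_add
    (HasFDerivAt.fun_sum (u := univ) fun a _ => HasFDerivAt.fun_sum (u := univ) fun b _ =>
      HasFDerivAt.fun_sum (u := univ) fun d _ =>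
        (((hx a).const_mul (T a b d)).fun_mul (hx b)).fun_mul (hx d))
  unfold cubicPoly
  rw [hF.fderiv]
  simp only [add_apply, _root_.sum_apply, smul_apply, ContinuousLinearMap.proj_apply, smul_eq_mul]
  congr 1
  · congr 1
    refine sum_congr rfl fun a _ => sum_congr rfl fun b _ => by ring
  · refine sum_congr rfl fun a _ => sum_congr rfl fun b _ => sum_congr rfl fun d _ => by ring

theorem fderiv_cubicPoly_apply_single [DecidableEq ι] (c : ι → ℝ) (Q : ι → ι → ℝ)
    (T : ι → ι → ι → ℝ) (η : ι → ℝ) (j : ι) :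
    fderiv ℝ (cubicPoly c Q T) η (Pi.single j 1) =
      c j + (∑ b, Q j b * η b + ∑ a, Q a j * η a)
        + (∑ b, ∑ d, T j b d * η b * η d + ∑ a, ∑ d, T a j d * η a * η d
          + ∑ a, ∑ b, T a b j * η a * η b) := by
  rw [fderiv_cubicPoly_apply]
  simp only [Pi.single_apply, mul_add, sum_add_distrib, ite_mul, mul_ite, one_mul, mul_one,
    zero_mul, mul_zero, sum_ite_irrel, sum_const_zero, sum_ite_eq', mem_univ, if_true, mul_assoc]

theorem fderiv_cubicPoly_apply_single_of_triangular [LinearOrder ι] (c : ι → ℝ) (Q : ι → ι → ℝ)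
    (T : ι → ι → ι → ℝ) (hQ : ∀ a b, ¬ a ≤ b → Q a b = 0)
    (hT : ∀ a b d, ¬ (a ≤ b ∧ b ≤ d) → T a b d = 0) (η : ι → ℝ) (j : ι)
    (hη : ∀ p, j ≤ p → η p = 0) :
    fderiv ℝ (cubicPoly c Q T) η (Pi.single j 1) =
      c j + ∑ a, Q a j * η a + ∑ a, ∑ b, T a b j * η a * η b := by
  have hQj : ∑ b, Q j b * η b = 0 := sum_eq_zero fun b _ => by
    by_cases hb : j ≤ b
    · rw [hη b hb, mul_zero]
    · rw [hQ j b hb, zero_mul]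
  have hTj : ∑ b, ∑ d, T j b d * η b * η d = 0 := sum_eq_zero fun b _ => sum_eq_zero fun d _ => by
    by_cases hb : j ≤ b
    · rw [hη b hb, mul_zero, zero_mul]
    · rw [hT j b d fun h => hb h.1, zero_mul, zero_mul]
  have hTj' : ∑ a, ∑ d, T a j d * η a * η d = 0 := sum_eq_zero fun a _ => sum_eq_zero fun d _ => by
    by_cases hd : j ≤ d
    · rw [hη d hd, mul_zero]
    · rw [hT a j d fun h => hd h.2, zero_mul, zero_mul]
  rw [fderiv_cubicPoly_apply_single, hQj, hTj, hTj']
  ring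

section TwoMode
variable [DecidableEq ι] {r s : ι} (x y : ℝ)

theorem sum_mul_twoMode (hrs : r ≠ s) (g : ι → ℝ) :
    ∑ p, g p * (if p = r then x else if p = s then y else 0) = g r * x + g s * y := by
  rw [Fintype.sum_eq_add r s hrs fun p hp => by simp [hp.1, hp.2]]
  simp [hrs.symm]

theorem sum_sum_mul_twoMode (hrs : r ≠ s) (G : ι → ι → ℝ) :
    ∑ a, ∑ b, G a b * (if a = r then x else if a = s then y else 0)
        * (if b = r then x else if b = s then y else 0) =
      G r r * x ^ 2 + (G r s + G s r) * (x * y) + G s s * y ^ 2 := by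
  rw [Fintype.sum_eq_add r s hrs fun a ha => by simp [ha.1, ha.2]]
  simp only [sum_mul_twoMode x y hrs, if_neg hrs.symm, if_true]
  ring
end TwoMode

theorem fderiv_cubicPoly_twoMode_apply_single [LinearOrder ι] (c : ι → ℝ) (Q : ι → ι → ℝ)
    (T : ι → ι → ι → ℝ) (hQ : ∀ a b, ¬ a ≤ b → Q a b = 0)
    (hT : ∀ a b d, ¬ (a ≤ b ∧ b ≤ d) → T a b d = 0) {r s j : ι} (hrs : r < s) (hsj : s < j)
    (x y : ℝ) :
    fderiv ℝ (cubicPoly c Q T)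
        (fun p => if p = r then x else if p = s then y else 0) (Pi.single j 1) - c j =
      Q r j * x + Q s j * y + T r s j * (x * y) + T r r j * x ^ 2 + T s s j * y ^ 2 := by
  have hη (p : ι) (hp : j ≤ p) : (if p = r then x else if p = s then y else 0) = 0 := by
    rw [if_neg (hrs.trans hsj |>.trans_le hp).ne', if_neg (hsj.trans_le hp).ne']
  rw [fderiv_cubicPoly_apply_single_of_triangular c Q T hQ hT _ j hη,
    sum_sum_mul_twoMode x y hrs.ne, sum_mul_twoMode x y hrs.ne, hT s r j fun h => hrs.not_ge h.1]
  ring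

end

/-- for a two-mode displacement `η = ηᵣ eᵣ + ηₛ eₛ` with
`r < s < j`, the nonlinear tangent stiffness expression identifies the cubic
coefficient `K̄³ᵢᵣₛⱼ` uniquely whenever `ηᵣ ηₛ ≠ 0`. -/
theorem tangent_stiffness_two_mode
    {m : ℕ} (K1 : Fin m → Fin m → ℝ) (KB2 : Fin m → Fin m → Fin m → ℝ)
    (KB3 : Fin m → Fin m → Fin m → Fin m → ℝ)
    (hKB2 : ∀ i j k, ¬ j ≤ k → KB2 i j k = 0)
    (hKB3 : ∀ i j k l, ¬ (j ≤ k ∧ k ≤ l) → KB3 i j k l = 0)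
    (f : (Fin m → ℝ) → Fin m → ℝ)
    (hf : ∀ η i, f η i = (∑ j, K1 i j * η j) + (∑ j, ∑ k, KB2 i j k * η j * η k)
      + ∑ j, ∑ k, ∑ l, KB3 i j k l * η j * η k * η l)
    (Kt : (Fin m → ℝ) → Fin m → Fin m → ℝ)
    (hKt : ∀ η i j, Kt η i j = fderiv ℝ (fun x => f x i) η (Pi.single j 1))
    (r s j : Fin m) (hrs : r < s) (hsj : s < j) (ηr ηs : ℝ) :
    ∀ i : Fin m,
      (Kt (fun p => if p = r then ηr else if p = s then ηs else 0) i j - K1 i j =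
        KB2 i r j * ηr + KB2 i s j * ηs + KB3 i r s j * (ηr * ηs)
          + KB3 i r r j * ηr ^ 2 + KB3 i s s j * ηs ^ 2) ∧
      (ηr * ηs ≠ 0 →
        ∃! X : ℝ,
          Kt (fun p => if p = r then ηr else if p = s then ηs else 0) i j - K1 i j =
            KB2 i r j * ηr + KB2 i s j * ηs + X * (ηr * ηs)
              + KB3 i r r j * ηr ^ 2 + KB3 i s s j * ηs ^ 2) := by
  intro i
  have hKt_sub : Kt (fun p => if p = r then ηr else if p = s then ηs else 0) i j - K1 i j =
      KB2 i r j * ηr + KB2 i s j * ηs + KB3 i r s j * (ηr * ηs)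
        + KB3 i r r j * ηr ^ 2 + KB3 i s s j * ηs ^ 2 := by
    rw [hKt, funext fun x => hf x i]
    exact fderiv_cubicPoly_twoMode_apply_single (K1 i) (KB2 i) (KB3 i) (hKB2 i) (hKB3 i) hrs hsj ηr ηs
  refine ⟨hKt_sub, fun hne => ⟨KB3 i r s j, hKt_sub, fun X hX => ?_⟩⟩
  exact mul_right_cancel₀ hne (by linarith)
end

section
/- The static quadratic manifold is a second-order approximation: if q(γ) solves the nonlinear static problem f(q) = Σᵢ γᵢ K¹ φᵢ with f(q) = K¹q + K²(q⊗q) + K³(q⊗q⊗q), K¹ invertible, K² fully symmetric, and q(0) = 0, then the second-order Taylor expansion of q at γ = 0 is Γ(γ) = Σᵢ γᵢφᵢ + ½ Σᵢⱼ γᵢγⱼ θ_{ij}, where θ_{ij} = −2(K¹)⁻¹ K²(φᵢ⊗φⱼ) (the static modal derivatives, up to normalization convention). -/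
open Finset Matrix

/-- the static quadratic manifold is the second-order Taylor
expansion of the nonlinear static solution branch: the first partial
derivatives at `γ = 0` are the vibration modes `φᵢ`, and the mixed second
partial derivatives are `−2(K¹)⁻¹K²(φᵢ⊗φⱼ)` (the static modal derivatives). -/
theorem static_quadratic_manifold_taylor
    {n nφ : ℕ} (K1 : Matrix (Fin n) (Fin n) ℝ) (hK1 : IsUnit K1.det)
    (K2 : Fin n → Fin n → Fin n → ℝ)
    (hK2sym : ∀ (σ : Equiv.Perm (Fin 3)) (v : Fin 3 → Fin n),
      K2 (v 0) (v 1) (v 2) = K2 (v (σ 0)) (v (σ 1)) (v (σ 2)))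
    (K3 : Fin n → Fin n → Fin n → Fin n → ℝ)
    (f : (Fin n → ℝ) → Fin n → ℝ)
    (hf : ∀ q a, f q a = (∑ b, K1 a b * q b) + (∑ b, ∑ c, K2 a b c * q b * q c)
      + ∑ b, ∑ c, ∑ d, K3 a b c d * q b * q c * q d)
    (φ : Fin nφ → Fin n → ℝ)
    (q : (Fin nφ → ℝ) → Fin n → ℝ)
    (hq_smooth : ContDiff ℝ (⊤ : ℕ∞) q)
    (hq0 : q 0 = 0)
    (hq_eq : ∀ γ, f (q γ) = fun a => ∑ i, γ i * (K1.mulVec (φ i)) a) :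
    (∀ i, fderiv ℝ q 0 (Pi.single i 1) = φ i) ∧
    (∀ i j, fderiv ℝ (fun γ => fderiv ℝ q γ (Pi.single i 1)) 0 (Pi.single j 1) =
      -(2 : ℝ) • K1⁻¹.mulVec (fun a => ∑ b, ∑ c, K2 a b c * φ i b * φ j c)) := by
  classical
  have hq0' : ∀ b, q 0 b = 0 := fun b => congrFun hq0 b
  have hinv : ∀ x y : Fin n → ℝ, K1.mulVec x = K1.mulVec y → x = y := by
    intro x y h
    have := congrArg (fun v => K1⁻¹.mulVec v) h
    simpa [Matrix.mulVec_mulVec, Matrix.nonsing_inv_mul K1 hK1] using this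
  have hswap : ∀ a b c, K2 a b c = K2 a c b := fun a b c => by
    simpa [Equiv.swap_apply_def] using hK2sym (Equiv.swap 1 2) ![a, b, c]
  have hcurve : ∀ (g : (Fin nφ → ℝ) → (Fin n → ℝ)), Differentiable ℝ g →
      ∀ (γ w : Fin nφ → ℝ) (b : Fin n),
      HasDerivAt (fun t : ℝ => g (γ + t • w) b) (fderiv ℝ g γ w b) 0 := by
    intro g hg γ w b
    have hc : HasDerivAt (fun t : ℝ => γ + t • w) w 0 := by
      simpa using ((hasDerivAt_id (0:ℝ)).smul_const w).const_add γ
    have hgd : HasFDerivAt g (fderiv ℝ g γ) γ := (hg γ).hasFDerivAt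
    have e : γ + (0:ℝ) • w = γ := by simp
    have h2 := HasFDerivAt.comp_hasDerivAt (l := g) 0 (e.symm ▸ hgd) hc
    rw [e] at h2
    exact (ContinuousLinearMap.proj b).hasFDerivAt.comp_hasDerivAt 0 h2
  have hqdiff : Differentiable ℝ q := hq_smooth.differentiable (by simp)
  -- the differentiated static equation, valid at every γ in every direction w
  have ident1 : ∀ (γ w : Fin nφ → ℝ) (a : Fin n),
      (∑ b, K1 a b * fderiv ℝ q γ w b)
      + (∑ b, ∑ c, ((K2 a b c * fderiv ℝ q γ w b) * q γ c
          + (K2 a b c * q γ b) * fderiv ℝ q γ w c))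
      + (∑ b, ∑ c, ∑ d,
          (((K3 a b c d * fderiv ℝ q γ w b) * q γ c
            + (K3 a b c d * q γ b) * fderiv ℝ q γ w c) * q γ d
          + ((K3 a b c d * q γ b) * q γ c) * fderiv ℝ q γ w d))
      = ∑ k, w k * K1.mulVec (φ k) a := by
    intro γ w a
    have hq' : ∀ b, HasDerivAt (fun t : ℝ => q (γ + t • w) b) (fderiv ℝ q γ w b) 0 :=
      hcurve q hqdiff γ w
    have hL0 :
        HasDerivAt (fun t : ℝ =>
          (∑ b, K1 a b * q (γ + t • w) b)
          + (∑ b, ∑ c, K2 a b c * q (γ + t • w) b * q (γ + t • w) c)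
          + ∑ b, ∑ c, ∑ d, K3 a b c d * q (γ + t • w) b * q (γ + t • w) c * q (γ + t • w) d)
          _ 0 :=
      ((HasDerivAt.fun_sum fun b _ => (hq' b).const_mul (K1 a b)).fun_add
        (HasDerivAt.fun_sum fun b _ => HasDerivAt.fun_sum fun c _ =>
          ((hq' b).const_mul (K2 a b c)).fun_mul (hq' c))).fun_add
        (HasDerivAt.fun_sum fun b _ => HasDerivAt.fun_sum fun c _ => HasDerivAt.fun_sum fun d _ =>
          (((hq' b).const_mul (K3 a b c d)).fun_mul (hq' c)).fun_mul (hq' d))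
    have hfun : (fun t : ℝ =>
          (∑ b, K1 a b * q (γ + t • w) b)
          + (∑ b, ∑ c, K2 a b c * q (γ + t • w) b * q (γ + t • w) c)
          + ∑ b, ∑ c, ∑ d, K3 a b c d * q (γ + t • w) b * q (γ + t • w) c * q (γ + t • w) d)
        = fun t : ℝ => ∑ k, (γ k + t * w k) * K1.mulVec (φ k) a := by
      funext t
      have h1 := congrFun (hq_eq (γ + t • w)) a
      rw [hf] at h1
      simpa using h1
    have hR : HasDerivAt (fun t : ℝ => ∑ k, (γ k + t * w k) * K1.mulVec (φ k) a)
        (∑ k, w k * K1.mulVec (φ k) a) 0 := by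
      have h : ∀ k : Fin nφ, HasDerivAt (fun t : ℝ => (γ k + t * w k) * K1.mulVec (φ k) a)
          (w k * K1.mulVec (φ k) a) 0 := fun k => by
        simpa using (((hasDerivAt_id (0:ℝ)).mul_const (w k)).const_add (γ k)).mul_const
          (K1.mulVec (φ k) a)
      exact HasDerivAt.fun_sum fun k _ => h k
    rw [hfun] at hL0
    have hkey := hL0.unique hR
    rw [← hkey]
    simp
  -- first derivatives are the modes
  have part1 : ∀ i, fderiv ℝ q 0 (Pi.single i 1) = φ i := by
    intro i
    apply hinv
    have hB : ∀ a, K1.mulVec (fderiv ℝ q 0 (Pi.single i 1)) a = K1.mulVec (φ i) a := by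
      intro a
      have h := ident1 0 (Pi.single i 1) a
      simp only [hq0', mul_zero, zero_mul, add_zero, zero_add,
        Finset.sum_const_zero] at h
      rw [Matrix.mulVec, dotProduct]
      rw [h]
      simp [Pi.single_apply, ite_mul]
    exact funext hB
  refine ⟨part1, ?_⟩
  intro i j
  have hFdiff : Differentiable ℝ (fun γ => fderiv ℝ q γ (Pi.single i 1)) := by
    have := hq_smooth.fderiv_right (m := (⊤ : ℕ∞)) (by simp)
    exact (this.clm_apply contDiff_const).differentiable (by simp)
  set ej : Fin nφ → ℝ := Pi.single j 1 with hej
  set DF : Fin n → ℝ := fderiv ℝ (fun γ => fderiv ℝ q γ (Pi.single i 1)) 0 ej with hDF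
  have hFb : ∀ b, HasDerivAt (fun t : ℝ => fderiv ℝ q (t • ej) (Pi.single i 1) b) (DF b) 0 := by
    intro b
    have := hcurve (fun γ => fderiv ℝ q γ (Pi.single i 1)) hFdiff 0 ej b
    simpa using this
  have hqb2 : ∀ b, HasDerivAt (fun t : ℝ => q (t • ej) b) (φ j b) 0 := by
    intro b
    have := hcurve q hqdiff 0 ej b
    simpa [hej, part1 j] using this
  have htarget : K1.mulVec (-(2:ℝ) • K1⁻¹.mulVec (fun a => ∑ b, ∑ c, K2 a b c * φ i b * φ j c))
      = -(2:ℝ) • (fun a => ∑ b, ∑ c, K2 a b c * φ i b * φ j c) := by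
    rw [Matrix.mulVec_smul, Matrix.mulVec_mulVec, Matrix.mul_nonsing_inv K1 hK1,
      Matrix.one_mulVec]
  apply hinv
  rw [htarget]
  funext a0
  -- differentiate the identity (ident1 with w = e_i) along the curve t • e_j
  have hG0 :
      HasDerivAt (fun t : ℝ =>
        (∑ b, K1 a0 b * fderiv ℝ q (t • ej) (Pi.single i 1) b)
        + (∑ b, ∑ c, ((K2 a0 b c * fderiv ℝ q (t • ej) (Pi.single i 1) b) * q (t • ej) c
            + (K2 a0 b c * q (t • ej) b) * fderiv ℝ q (t • ej) (Pi.single i 1) c))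
        + (∑ b, ∑ c, ∑ d,
            (((K3 a0 b c d * fderiv ℝ q (t • ej) (Pi.single i 1) b) * q (t • ej) c
              + (K3 a0 b c d * q (t • ej) b) * fderiv ℝ q (t • ej) (Pi.single i 1) c) * q (t • ej) d
            + ((K3 a0 b c d * q (t • ej) b) * q (t • ej) c)
                * fderiv ℝ q (t • ej) (Pi.single i 1) d)))
        _ 0 :=
    ((HasDerivAt.fun_sum fun b _ => (hFb b).const_mul (K1 a0 b)).fun_add
      (HasDerivAt.fun_sum fun b _ => HasDerivAt.fun_sum fun c _ =>
        ((((hFb b).const_mul (K2 a0 b c)).fun_mul (hqb2 c)).fun_add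
          (((hqb2 b).const_mul (K2 a0 b c)).fun_mul (hFb c))))).fun_add
      (HasDerivAt.fun_sum fun b _ => HasDerivAt.fun_sum fun c _ => HasDerivAt.fun_sum fun d _ =>
        ((((((hFb b).const_mul (K3 a0 b c d)).fun_mul (hqb2 c)).fun_add
            (((hqb2 b).const_mul (K3 a0 b c d)).fun_mul (hFb c))).fun_mul (hqb2 d)).fun_add
          ((((hqb2 b).const_mul (K3 a0 b c d)).fun_mul (hqb2 c)).fun_mul (hFb d))))
  have hGfun : (fun t : ℝ =>
        (∑ b, K1 a0 b * fderiv ℝ q (t • ej) (Pi.single i 1) b)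
        + (∑ b, ∑ c, ((K2 a0 b c * fderiv ℝ q (t • ej) (Pi.single i 1) b) * q (t • ej) c
            + (K2 a0 b c * q (t • ej) b) * fderiv ℝ q (t • ej) (Pi.single i 1) c))
        + (∑ b, ∑ c, ∑ d,
            (((K3 a0 b c d * fderiv ℝ q (t • ej) (Pi.single i 1) b) * q (t • ej) c
              + (K3 a0 b c d * q (t • ej) b) * fderiv ℝ q (t • ej) (Pi.single i 1) c) * q (t • ej) d
            + ((K3 a0 b c d * q (t • ej) b) * q (t • ej) c)
                * fderiv ℝ q (t • ej) (Pi.single i 1) d)))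
      = fun _ : ℝ => ∑ k, (Pi.single i 1 : Fin nφ → ℝ) k * K1.mulVec (φ k) a0 :=
    funext fun t => ident1 (t • ej) (Pi.single i 1) a0
  rw [hGfun] at hG0
  have hkey := hG0.unique (hasDerivAt_const _ _)
  simp only [zero_smul, hq0', part1 i, part1 j, mul_zero, zero_mul, add_zero, zero_add,
    Finset.sum_const_zero] at hkey
  -- symmetry of K2 in the last two slots
  have hsym2 : ∑ b, ∑ c, K2 a0 b c * φ j b * φ i c = ∑ b, ∑ c, K2 a0 b c * φ i b * φ j c := by
    rw [Finset.sum_comm]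
    exact Finset.sum_congr rfl fun b _ => Finset.sum_congr rfl fun c _ => by
      rw [hswap a0 c b]; ring
  -- finish by linear algebra
  have hmv : K1.mulVec DF a0 = ∑ b, K1 a0 b * DF b := by
    rw [Matrix.mulVec, dotProduct]
  rw [hmv]
  simp only [Pi.smul_apply, smul_eq_mul]
  -- hkey should now read: ∑ b, K1 a0 b * DF b + (quadratic terms) = 0
  have hsplit : ∑ b, ∑ c, (K2 a0 b c * φ i b * φ j c + K2 a0 b c * φ j b * φ i c)
      = (∑ b, ∑ c, K2 a0 b c * φ i b * φ j c) + ∑ b, ∑ c, K2 a0 b c * φ j b * φ i c := by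
    simp [Finset.sum_add_distrib]
  linarith [hkey, hsym2, hsplit]
end
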